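/- arXiv:1402.4276 — 2 statements merged into one kernel-verified Lean document; each statement's English description precedes it below -/
import Mathlib

section
/- Let Ω ⊆ Ω₁ ⊆ ℝⁿ with Ω nonempty, let F be a Taylorian 1-field on Ω with κ := Γ¹(F;Ω) > 0, and let G be a minimal Lipschitz extension of F on Ω₁. Then for every x ∈ Ω₁ one has D_xg ∈ Λ_x and sup_{a∈Ω} Ψ⁻(F,x,a,D_xg) ≤ g_x ≤ inf_{a∈Ω} Ψ⁺(F,x,a,D_xg) ≤ u⁺(x), where u⁺(x) := sup_{v∈Λ_x} inf_{a∈Ω} Ψ⁺(F,x,a,v). -/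
noncomputable section

open scoped RealInnerProductSpace

section GammaDefs

variable {H : Type*} [NormedAddCommGroup H] [InnerProductSpace ℝ H]

/-- Evaluation of the first-degree polynomial `F(x)` at `a`:
`F(x)(a) = f_x + ⟨D_xf, a - x⟩`. -/
def fieldEval (f : H → ℝ) (Df : H → H) (x a : H) : ℝ :=
  f x + ⟪Df x, a - x⟫

/-- `Γ¹(F; x, y) = 2 · sup_{a} |F(x)(a) - F(y)(a)| / (‖x-a‖² + ‖y-a‖²)` for `x ≠ y`. -/
def gammaPair (f : H → ℝ) (Df : H → H) (x y : H) : ℝ :=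
  ⨆ a : H, 2 * |fieldEval f Df x a - fieldEval f Df y a| / (‖x - a‖ ^ 2 + ‖y - a‖ ^ 2)

/-- The set of values `Γ¹(F; x, y)` for `x ≠ y` ranging over `S`. -/
def gammaVals (f : H → ℝ) (Df : H → H) (S : Set H) : Set ℝ :=
  {t | ∃ x ∈ S, ∃ y ∈ S, x ≠ y ∧ t = gammaPair f Df x y}

/-- `Γ¹(F; S) = sup_{x ≠ y ∈ S} Γ¹(F; x, y)` (real supremum, `0` if `S` has at most one point). -/
def gammaOn (f : H → ℝ) (Df : H → H) (S : Set H) : ℝ :=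
  sSup (gammaVals f Df S)

end GammaDefs

section LipDefs

variable {α β : Type*} [NormedAddCommGroup α] [NormedAddCommGroup β]

/-- The set of difference quotients `‖g x - g y‖ / ‖x - y‖`, `x ≠ y ∈ S`. -/
def lipVals (g : α → β) (S : Set α) : Set ℝ :=
  {t | ∃ x ∈ S, ∃ y ∈ S, x ≠ y ∧ t = ‖g x - g y‖ / ‖x - y‖}

/-- `Lip(g; S) = sup_{x ≠ y ∈ S} ‖g x - g y‖ / ‖x - y‖` (real supremum). -/
def lipOn (g : α → β) (S : Set α) : ℝ :=
  sSup (lipVals g S)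

end LipDefs

section PsiDefs

variable {H : Type*} [NormedAddCommGroup H] [InnerProductSpace ℝ H]

/-- `v_{a,b} = ½(D_af + D_bf) + (κ/2)(b - a)`. -/
def vab (Df : H → H) (κ : ℝ) (a b : H) : H :=
  (1 / 2 : ℝ) • (Df a + Df b) + (κ / 2) • (b - a)

/-- `α_{a,b}`. -/
def alphaab (f : H → ℝ) (Df : H → H) (κ : ℝ) (a b : H) : ℝ :=
  2 * κ * (f a - f b) + κ * ⟪Df a + Df b, b - a⟫
    - 1 / 2 * ‖Df a - Df b‖ ^ 2 + κ ^ 2 / 2 * ‖a - b‖ ^ 2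

/-- `β_{a,b}(x)`. -/
def betaab (Df : H → H) (κ : ℝ) (a b x : H) : ℝ :=
  ‖(1 / 2 : ℝ) • (Df a - Df b) + (κ / 2) • ((2 : ℝ) • x - a - b)‖ ^ 2

/-- `r_{a,b}(x) = √(α_{a,b} + β_{a,b}(x))`. -/
def rab (f : H → ℝ) (Df : H → H) (κ : ℝ) (a b x : H) : ℝ :=
  Real.sqrt (alphaab f Df κ a b + betaab Df κ a b x)

/-- `Λ_x = {v : ‖v - v_{a,b}‖ ≤ r_{a,b}(x) for all a, b ∈ Ω}`. -/
def Lambda (f : H → ℝ) (Df : H → H) (κ : ℝ) (Ω : Set H) (x : H) : Set H :=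
  {v | ∀ a ∈ Ω, ∀ b ∈ Ω, ‖v - vab Df κ a b‖ ≤ rab f Df κ a b x}

/-- `Ψ⁺(F, x, a, v)`. -/
def PsiPlus (f : H → ℝ) (Df : H → H) (κ : ℝ) (x a v : H) : ℝ :=
  f a + 1 / 2 * ⟪Df a + v, x - a⟫ + κ / 4 * ‖a - x‖ ^ 2 - 1 / (4 * κ) * ‖Df a - v‖ ^ 2

/-- `Ψ⁻(F, x, a, v)`. -/
def PsiMinus (f : H → ℝ) (Df : H → H) (κ : ℝ) (x a v : H) : ℝ :=
  f a + 1 / 2 * ⟪Df a + v, x - a⟫ - κ / 4 * ‖a - x‖ ^ 2 + 1 / (4 * κ) * ‖Df a - v‖ ^ 2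

/-- `inf_{a ∈ Ω} Ψ⁺(F, x, a, v)`. -/
def infPsiPlus (f : H → ℝ) (Df : H → H) (κ : ℝ) (Ω : Set H) (x v : H) : ℝ :=
  sInf {t | ∃ a ∈ Ω, t = PsiPlus f Df κ x a v}

/-- `sup_{a ∈ Ω} Ψ⁻(F, x, a, v)`. -/
def supPsiMinus (f : H → ℝ) (Df : H → H) (κ : ℝ) (Ω : Set H) (x v : H) : ℝ :=
  sSup {t | ∃ a ∈ Ω, t = PsiMinus f Df κ x a v}

/-- `u⁺(x) = sup_{v ∈ Λ_x} inf_{a ∈ Ω} Ψ⁺(F, x, a, v)`. -/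
def uPlus (f : H → ℝ) (Df : H → H) (κ : ℝ) (Ω : Set H) (x : H) : ℝ :=
  sSup {t | ∃ v ∈ Lambda f Df κ Ω x, t = infPsiPlus f Df κ Ω x v}

/-- `u⁻(x) = inf_{v ∈ Λ_x} sup_{a ∈ Ω} Ψ⁻(F, x, a, v)`. -/
def uMinus (f : H → ℝ) (Df : H → H) (κ : ℝ) (Ω : Set H) (x : H) : ℝ :=
  sInf {t | ∃ v ∈ Lambda f Df κ Ω x, t = supPsiMinus f Df κ Ω x v}

/-- `(g, Dg)` is a minimal Lipschitz extension of the 1-field `(f, Df)` of domain `Ω` to `H`. -/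
def IsMLE (f : H → ℝ) (Df : H → H) (Ω : Set H) (g : H → ℝ) (Dg : H → H) : Prop :=
  (∀ x ∈ Ω, g x = f x ∧ Dg x = Df x) ∧ gammaOn g Dg Set.univ = gammaOn f Df Ω

/-- Over extremal MLE. -/
def IsOverExtremal (f : H → ℝ) (Df : H → H) (Ω : Set H) (g₁ : H → ℝ) (Dg₁ : H → H) : Prop :=
  IsMLE f Df Ω g₁ Dg₁ ∧ ∀ g Dg, IsMLE f Df Ω g Dg → ∀ x, g x ≤ g₁ x

/-- Under extremal MLE. -/
def IsUnderExtremal (f : H → ℝ) (Df : H → H) (Ω : Set H) (g₂ : H → ℝ) (Dg₂ : H → H) : Prop :=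
  IsMLE f Df Ω g₂ Dg₂ ∧ ∀ g Dg, IsMLE f Df Ω g Dg → ∀ x, g₂ x ≤ g x

/-- Absolutely minimal Lipschitz extension. -/
def IsAMLE (f : H → ℝ) (Df : H → H) (Ω : Set H) (g : H → ℝ) (Dg : H → H) : Prop :=
  IsMLE f Df Ω g Dg ∧
    ∀ V : Set H, V.Nonempty → IsOpen V → Bornology.IsBounded V → closure V ⊆ Ωᶜ →
      gammaOn g Dg V = gammaOn g Dg (frontier V)

end PsiDefs

/-! For `x ∈ Ω₁` and `a ∈ Ω`, minimality of `G` gives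
`2 |G(x)(z) - F(a)(z)| ≤ κ (‖x - z‖² + ‖a - z‖²)` for every `z`; testing this at
`z = (x + a)/2 ± (D_xg - D_af)/(2κ)` yields `Ψ⁻(F,x,a,D_xg) ≤ g_x ≤ Ψ⁺(F,x,a,D_xg)`.
Since `α_{a,b} + β_{a,b}(x) - ‖v - v_{a,b}‖² = 2κ (Ψ⁺(F,x,a,v) - Ψ⁻(F,x,b,v))`, these two-sided
bounds put `D_xg` in `Λ_x`. Finally `Ψ⁺(F,x,a,v) ≤ F(a)(x) + (κ/2)‖x - a‖²` for all `v`, so the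
supremum defining `u⁺(x)` is finite and dominates `inf_a Ψ⁺(F,x,a,D_xg)`. -/

section OneField

variable {H : Type*} [NormedAddCommGroup H] [InnerProductSpace ℝ H]
  {f : H → ℝ} {Df : H → H} {κ : ℝ}

lemma fieldEval_sub_fieldEval (x y a : H) :
    fieldEval f Df x a - fieldEval f Df y a =
      (fieldEval f Df x x - fieldEval f Df y x) + ⟪Df x - Df y, a - x⟫ := by
  simp only [fieldEval, sub_self, inner_zero_right, inner_sub_left]
  rw [show a - y = (a - x) + (x - y) by abel, inner_add_right]
  ring

/-- The quotients defining `Γ¹(F; x, y)` are bounded, so `gammaPair` is an honest supremum. -/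
lemma bddAbove_gammaPair_quotients {x y : H} (hxy : x ≠ y) :
    BddAbove (Set.range fun a =>
      2 * |fieldEval f Df x a - fieldEval f Df y a| / (‖x - a‖ ^ 2 + ‖y - a‖ ^ 2)) := by
  set K := 2 * |fieldEval f Df x x - fieldEval f Df y x| + ‖Df x - Df y‖ ^ 2
  have hxy' : 0 < ‖x - y‖ := norm_pos_iff.2 (sub_ne_zero.2 hxy)
  refine ⟨K * (2 / ‖x - y‖ ^ 2) + 1, ?_⟩
  rintro t ⟨a, rfl⟩
  set D := ‖x - a‖ ^ 2 + ‖y - a‖ ^ 2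
  have hD : ‖x - y‖ ^ 2 ≤ 2 * D := by
    have := add_sq_le (a := ‖x - a‖) (b := ‖y - a‖)
    have := norm_sub_le_norm_sub_add_norm_sub x a y
    rw [norm_sub_rev a y] at this
    nlinarith [norm_nonneg (x - y)]
  have hDpos : 0 < D := by nlinarith
  have hnum : 2 * |fieldEval f Df x a - fieldEval f Df y a| ≤ K + D := by
    rw [fieldEval_sub_fieldEval]
    have hinner := abs_real_inner_le_norm (Df x - Df y) (a - x)
    rw [norm_sub_rev a x] at hinner
    nlinarith [abs_add_le (fieldEval f Df x x - fieldEval f Df y x) ⟪Df x - Df y, a - x⟫,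
      sq_nonneg (‖Df x - Df y‖ - ‖x - a‖), norm_nonneg (y - a)]
  have hKD : K ≤ K * (2 / ‖x - y‖ ^ 2) * D := by
    have hK : 0 ≤ K := by positivity
    rw [mul_assoc, div_mul_eq_mul_div]
    exact le_mul_of_one_le_right hK ((one_le_div (by positivity)).2 hD)
  rw [div_le_iff₀ hDpos]
  linarith

lemma two_mul_abs_fieldEval_sub_le_gammaPair {x y : H} (hxy : x ≠ y) (a : H) :
    2 * |fieldEval f Df x a - fieldEval f Df y a| ≤
      gammaPair f Df x y * (‖x - a‖ ^ 2 + ‖y - a‖ ^ 2) := by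
  have hpos : 0 < ‖x - a‖ ^ 2 + ‖y - a‖ ^ 2 := by
    by_cases hxa : x = a
    · subst hxa
      have : 0 < ‖y - x‖ := norm_pos_iff.2 (sub_ne_zero.2 (Ne.symm hxy))
      positivity
    · have : 0 < ‖x - a‖ := norm_pos_iff.2 (sub_ne_zero.2 hxa)
      positivity
  rw [← div_le_iff₀ hpos]
  exact le_ciSup (bddAbove_gammaPair_quotients hxy) a

lemma gammaPair_nonneg (x y : H) : 0 ≤ gammaPair f Df x y :=
  Real.iSup_nonneg fun _ => by positivity

lemma gammaOn_nonneg (S : Set H) : 0 ≤ gammaOn f Df S :=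
  Real.sSup_nonneg fun _ ⟨_, _, _, _, _, ht⟩ => ht ▸ gammaPair_nonneg _ _

lemma bddAbove_gammaVals_of_gammaOn_pos {S : Set H} (h : 0 < gammaOn f Df S) :
    BddAbove (gammaVals f Df S) := by
  by_contra hS
  rw [gammaOn, Real.sSup_of_not_bddAbove hS] at h
  exact lt_irrefl 0 h

lemma two_mul_abs_fieldEval_sub_le_gammaOn {S : Set H} (hS : BddAbove (gammaVals f Df S))
    {x y : H} (hx : x ∈ S) (hy : y ∈ S) (a : H) :
    2 * |fieldEval f Df x a - fieldEval f Df y a| ≤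
      gammaOn f Df S * (‖x - a‖ ^ 2 + ‖y - a‖ ^ 2) := by
  rcases eq_or_ne x y with rfl | hxy
  · simpa using mul_nonneg (gammaOn_nonneg (f := f) (Df := Df) S) (by positivity)
  · refine (two_mul_abs_fieldEval_sub_le_gammaPair hxy a).trans ?_
    gcongr
    exact le_csSup hS ⟨x, hx, y, hy, hxy, rfl⟩

lemma le_of_forall_two_mul_sub_le (hκ : 0 < κ) {x a u v : H} {gx fa : ℝ}
    (h : ∀ z, 2 * (gx + ⟪v, z - x⟫ - (fa + ⟪u, z - a⟫)) ≤ κ * (‖x - z‖ ^ 2 + ‖a - z‖ ^ 2)) :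
    gx ≤ fa + 1 / 2 * ⟪u + v, x - a⟫ + κ / 4 * ‖a - x‖ ^ 2 - 1 / (4 * κ) * ‖u - v‖ ^ 2 := by
  set p := x - a
  set q := v - u
  set s := 1 / (2 * κ)
  set z := (1 / 2 : ℝ) • (x + a) + s • q
  have hxz : x - z = (1 / 2 : ℝ) • p - s • q := by simp only [z, p]; module
  have haz : a - z = -((1 / 2 : ℝ) • p + s • q) := by simp only [z, p]; module
  have hzx : z - x = s • q - (1 / 2 : ℝ) • p := by simp only [z, p]; module
  have hza : z - a = s • q + (1 / 2 : ℝ) • p := by simp only [z, p]; module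
  have hdist : ‖x - z‖ ^ 2 + ‖a - z‖ ^ 2 = 1 / 2 * ‖p‖ ^ 2 + 2 * s ^ 2 * ‖q‖ ^ 2 := by
    rw [hxz, haz, norm_neg, norm_sub_sq_real, norm_add_sq_real, norm_smul, norm_smul]
    simp only [Real.norm_eq_abs, mul_pow, sq_abs]
    ring
  have hlin : ⟪v, z - x⟫ - ⟪u, z - a⟫ = s * ‖q‖ ^ 2 - 1 / 2 * ⟪u + v, p⟫ := by
    rw [hzx, hza, ← real_inner_self_eq_norm_sq]
    simp only [q, inner_sub_right, inner_add_right, real_inner_smul_right, inner_add_left,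
      inner_sub_left]
    ring
  have hz := h z
  rw [hdist, show gx + ⟪v, z - x⟫ - (fa + ⟪u, z - a⟫) = gx - fa + (⟪v, z - x⟫ - ⟪u, z - a⟫)
    by ring, hlin] at hz
  rw [norm_sub_rev a x, norm_sub_rev u v]
  have hs : κ * (2 * s ^ 2) = s := by simp only [s]; field_simp
  have hs' : 1 / (4 * κ) = s / 2 := by simp only [s]; field_simp; ring
  rw [hs']
  linear_combination hz / 2 + ‖q‖ ^ 2 / 2 * hs

lemma psiMinus_le_and_le_psiPlus (hκ : 0 < κ) {x a v : H} {gx : ℝ}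
    (h : ∀ z, 2 * |gx + ⟪v, z - x⟫ - fieldEval f Df a z| ≤ κ * (‖x - z‖ ^ 2 + ‖a - z‖ ^ 2)) :
    PsiMinus f Df κ x a v ≤ gx ∧ gx ≤ PsiPlus f Df κ x a v := by
  simp only [fieldEval] at h
  constructor
  · have := le_of_forall_two_mul_sub_le hκ (x := x) (a := a) (gx := -gx) (fa := -f a)
      (u := -Df a) (v := -v) fun z => by
        simp only [inner_neg_left]
        linarith [h z, neg_abs_le (gx + ⟪v, z - x⟫ - (f a + ⟪Df a, z - a⟫))]
    rw [← neg_add, inner_neg_left, ← neg_sub', norm_neg] at this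
    simp only [PsiMinus]
    linarith
  · exact le_of_forall_two_mul_sub_le hκ fun z => (mul_le_mul_of_nonneg_left (le_abs_self _)
      zero_le_two).trans (h z)

lemma alphaab_add_betaab_sub_norm_sq (hκ : κ ≠ 0) (x a b v : H) :
    alphaab f Df κ a b + betaab Df κ a b x - ‖v - vab Df κ a b‖ ^ 2 =
      2 * κ * (PsiPlus f Df κ x a v - PsiMinus f Df κ x b v) := by
  simp only [alphaab, betaab, vab, PsiPlus, PsiMinus, ← real_inner_self_eq_norm_sq]
  simp only [inner_sub_left, inner_sub_right, inner_add_left, inner_add_right,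
    real_inner_smul_right, real_inner_comm]
  field_simp
  ring

lemma mem_Lambda_of_psiMinus_le_psiPlus (hκ : 0 < κ) {Ω : Set H} {x v : H}
    (h : ∀ a ∈ Ω, ∀ b ∈ Ω, PsiMinus f Df κ x b v ≤ PsiPlus f Df κ x a v) :
    v ∈ Lambda f Df κ Ω x := by
  intro a ha b hb
  have hsq : ‖v - vab Df κ a b‖ ^ 2 ≤ alphaab f Df κ a b + betaab Df κ a b x := by
    have := alphaab_add_betaab_sub_norm_sq (f := f) (Df := Df) hκ.ne' x a b v
    nlinarith [mul_nonneg hκ.le (sub_nonneg.2 (h a ha b hb))]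
  exact Real.le_sqrt_of_sq_le hsq

-- AM-GM on `⟪v - D_af, x - a⟫`
lemma psiPlus_le (hκ : 0 < κ) (x a v : H) :
    PsiPlus f Df κ x a v ≤ fieldEval f Df a x + κ / 2 * ‖x - a‖ ^ 2 := by
  have hsq : 0 ≤ ‖(v - Df a) - κ • (x - a)‖ ^ 2 / (4 * κ) := by positivity
  rw [norm_sub_sq_real, norm_smul, real_inner_smul_right, Real.norm_eq_abs, abs_of_pos hκ]
    at hsq
  have hsplit : ⟪Df a + v, x - a⟫ = 2 * ⟪Df a, x - a⟫ + ⟪v - Df a, x - a⟫ := by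
    rw [show Df a + v = (2 : ℝ) • Df a + (v - Df a) by module, inner_add_left,
      real_inner_smul_left]
  simp only [PsiPlus, fieldEval, hsplit, norm_sub_rev a x, norm_sub_rev (Df a) v]
  field_simp at hsq ⊢
  nlinarith

lemma supPsiMinus_le {Ω : Set H} (hΩ : Ω.Nonempty) {x v : H} {c : ℝ}
    (h : ∀ a ∈ Ω, PsiMinus f Df κ x a v ≤ c) : supPsiMinus f Df κ Ω x v ≤ c :=
  csSup_le (let ⟨a, ha⟩ := hΩ; ⟨_, a, ha, rfl⟩) fun _ ⟨a, ha, ht⟩ => ht ▸ h a ha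

lemma le_infPsiPlus {Ω : Set H} (hΩ : Ω.Nonempty) {x v : H} {c : ℝ}
    (h : ∀ a ∈ Ω, c ≤ PsiPlus f Df κ x a v) : c ≤ infPsiPlus f Df κ Ω x v :=
  le_csInf (let ⟨a, ha⟩ := hΩ; ⟨_, a, ha, rfl⟩) fun _ ⟨a, ha, ht⟩ => ht ▸ h a ha

lemma infPsiPlus_le_uPlus (hκ : 0 < κ) {Ω : Set H} (hΩ : Ω.Nonempty) {x v : H}
    (hv : v ∈ Lambda f Df κ Ω x) : infPsiPlus f Df κ Ω x v ≤ uPlus f Df κ Ω x := by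
  obtain ⟨a, ha⟩ := hΩ
  refine le_csSup ⟨max (fieldEval f Df a x + κ / 2 * ‖x - a‖ ^ 2) 0, ?_⟩ ⟨v, hv, rfl⟩
  rintro _ ⟨w, -, rfl⟩
  by_cases hb : BddBelow {t | ∃ a ∈ Ω, t = PsiPlus f Df κ x a w}
  · exact ((csInf_le hb ⟨a, ha, rfl⟩).trans (psiPlus_le hκ x a w)).trans (le_max_left _ _)
  · rw [infPsiPlus, Real.sInf_of_not_bddBelow hb]
    exact le_max_right _ _

end OneField

theorem stmt_11_general {n : ℕ} (Ω Ω₁ : Set (EuclideanSpace ℝ (Fin n)))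
    (hΩne : Ω.Nonempty) (hsub : Ω ⊆ Ω₁)
    (f : EuclideanSpace ℝ (Fin n) → ℝ)
    (Df : EuclideanSpace ℝ (Fin n) → EuclideanSpace ℝ (Fin n))
    (hκpos : 0 < gammaOn f Df Ω)
    (g : EuclideanSpace ℝ (Fin n) → ℝ)
    (Dg : EuclideanSpace ℝ (Fin n) → EuclideanSpace ℝ (Fin n))
    (hext : ∀ x ∈ Ω, g x = f x ∧ Dg x = Df x)
    (hmin : gammaOn g Dg Ω₁ = gammaOn f Df Ω) :
    ∀ x ∈ Ω₁,
      Dg x ∈ Lambda f Df (gammaOn f Df Ω) Ω x ∧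
      supPsiMinus f Df (gammaOn f Df Ω) Ω x (Dg x) ≤ g x ∧
      g x ≤ infPsiPlus f Df (gammaOn f Df Ω) Ω x (Dg x) ∧
      infPsiPlus f Df (gammaOn f Df Ω) Ω x (Dg x) ≤ uPlus f Df (gammaOn f Df Ω) Ω x := by
  intro x hx
  have hG : BddAbove (gammaVals g Dg Ω₁) := bddAbove_gammaVals_of_gammaOn_pos (hmin ▸ hκpos)
  have hPsi : ∀ a ∈ Ω, PsiMinus f Df (gammaOn f Df Ω) x a (Dg x) ≤ g x ∧
      g x ≤ PsiPlus f Df (gammaOn f Df Ω) x a (Dg x) := by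
    intro a ha
    refine psiMinus_le_and_le_psiPlus hκpos fun z => ?_
    have := two_mul_abs_fieldEval_sub_le_gammaOn hG hx (hsub ha) z
    rwa [hmin, fieldEval, fieldEval, (hext a ha).1, (hext a ha).2] at this
  have hΛ : Dg x ∈ Lambda f Df (gammaOn f Df Ω) Ω x :=
    mem_Lambda_of_psiMinus_le_psiPlus hκpos fun a ha b hb => (hPsi b hb).1.trans (hPsi a ha).2
  exact ⟨hΛ, supPsiMinus_le hΩne fun a ha => (hPsi a ha).1,
    le_infPsiPlus hΩne fun a ha => (hPsi a ha).2, infPsiPlus_le_uPlus hκpos hΩne hΛ⟩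

/-- Let `Ω ⊆ Ω₁ ⊆ ℝⁿ` with `Ω` nonempty, `F = (f, Df)` a Taylorian 1-field
on `Ω` with `κ := Γ¹(F;Ω) > 0`, and let `G = (g, Dg)` be a minimal Lipschitz extension of `F`
on `Ω₁`. Then for every `x ∈ Ω₁`: `D_xg ∈ Λ_x` and
`sup_{a∈Ω} Ψ⁻(F,x,a,D_xg) ≤ g_x ≤ inf_{a∈Ω} Ψ⁺(F,x,a,D_xg) ≤ u⁺(x)`. -/
theorem stmt_11 {n : ℕ} (hn : 1 ≤ n) (Ω Ω₁ : Set (EuclideanSpace ℝ (Fin n)))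
    (hΩne : Ω.Nonempty) (hsub : Ω ⊆ Ω₁)
    (f : EuclideanSpace ℝ (Fin n) → ℝ)
    (Df : EuclideanSpace ℝ (Fin n) → EuclideanSpace ℝ (Fin n))
    (hTay : BddAbove (gammaVals f Df Ω))
    (hκpos : 0 < gammaOn f Df Ω)
    (g : EuclideanSpace ℝ (Fin n) → ℝ)
    (Dg : EuclideanSpace ℝ (Fin n) → EuclideanSpace ℝ (Fin n))
    (hext : ∀ x ∈ Ω, g x = f x ∧ Dg x = Df x)
    (hmin : gammaOn g Dg Ω₁ = gammaOn f Df Ω) :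
    ∀ x ∈ Ω₁,
      Dg x ∈ Lambda f Df (gammaOn f Df Ω) Ω x ∧
      supPsiMinus f Df (gammaOn f Df Ω) Ω x (Dg x) ≤ g x ∧
      g x ≤ infPsiPlus f Df (gammaOn f Df Ω) Ω x (Dg x) ∧
      infPsiPlus f Df (gammaOn f Df Ω) Ω x (Dg x) ≤ uPlus f Df (gammaOn f Df Ω) Ω x :=
  stmt_11_general Ω Ω₁ hΩne hsub f Df hκpos g Dg hext hmin
end
end

section
/- Let Ω ⊆ ℝⁿ be nonempty, let F be a 1-field on Ω, and let κ > 0. Then Γ¹(F;Ω) ≤ κ if and only if for all x, y ∈ Ω: f_y ≤ f_x + ½⟨D_xf + D_yf, y − x⟩ + (κ/4)‖y − x‖² − (1/(4κ))‖D_xf − D_yf‖². -/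
noncomputable section

open scoped RealInnerProductSpace

section MyAux
variable {H : Type*} [NormedAddCommGroup H] [InnerProductSpace ℝ H]

private lemma key_ident (κ : ℝ) (hκ : 0 < κ) (fx fy : ℝ) (x y Dx Dy a : H) :
    κ * (‖x - a‖ ^ 2 + ‖y - a‖ ^ 2) + 2 * (fx - fy + ⟪Dx, a - x⟫ - ⟪Dy, a - y⟫)
      = 2 * κ * ‖a - (1 / 2 : ℝ) • (x + y) + (1 / (2 * κ)) • (Dx - Dy)‖ ^ 2
        - 2 * (fy - fx - 1 / 2 * ⟪Dx + Dy, y - x⟫ - κ / 4 * ‖y - x‖ ^ 2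
          + 1 / (4 * κ) * ‖Dx - Dy‖ ^ 2) := by
  have hk : κ ≠ 0 := ne_of_gt hκ
  simp only [← real_inner_self_eq_norm_sq, inner_sub_left, inner_sub_right,
    inner_add_left, inner_add_right, real_inner_smul_left, real_inner_smul_right]
  simp only [real_inner_comm a x, real_inner_comm a y, real_inner_comm a Dx,
    real_inner_comm a Dy, real_inner_comm x Dx, real_inner_comm x Dy,
    real_inner_comm y Dx, real_inner_comm y Dy, real_inner_comm x y,
    real_inner_comm Dx Dy]
  field_simp
  ring

private lemma signed_iff (κ : ℝ) (hκ : 0 < κ) (fx fy : ℝ) (x y Dx Dy : H) :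
    (∀ a : H, 2 * (fy - fx + ⟪Dy, a - y⟫ - ⟪Dx, a - x⟫) ≤ κ * (‖x - a‖ ^ 2 + ‖y - a‖ ^ 2)) ↔
      fy ≤ fx + 1 / 2 * ⟪Dx + Dy, y - x⟫ + κ / 4 * ‖y - x‖ ^ 2
        - 1 / (4 * κ) * ‖Dx - Dy‖ ^ 2 := by
  constructor
  · intro h
    set a₀ : H := (1 / 2 : ℝ) • (x + y) - (1 / (2 * κ)) • (Dx - Dy) with ha₀
    have h0 := h a₀
    have hid := key_ident κ hκ fx fy x y Dx Dy a₀
    have hz : a₀ - (1 / 2 : ℝ) • (x + y) + (1 / (2 * κ)) • (Dx - Dy) = 0 := by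
      rw [ha₀]; abel
    rw [hz] at hid
    simp only [norm_zero] at hid
    nlinarith [hid, h0]
  · intro h a
    have hid := key_ident κ hκ fx fy x y Dx Dy a
    nlinarith [sq_nonneg ‖a - (1 / 2 : ℝ) • (x + y) + (1 / (2 * κ)) • (Dx - Dy)‖,
      mul_nonneg (le_of_lt hκ) (sq_nonneg ‖a - (1 / 2 : ℝ) • (x + y) + (1 / (2 * κ)) • (Dx - Dy)‖)]

private lemma Q_pos (x y a : H) (hxy : x ≠ y) : 0 < ‖x - a‖ ^ 2 + ‖y - a‖ ^ 2 := by
  rcases eq_or_ne a x with rfl | hax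
  · have : 0 < ‖y - a‖ := by
      rw [norm_pos_iff, sub_ne_zero]; exact (Ne.symm hxy)
    positivity
  · have : 0 < ‖x - a‖ := by
      rw [norm_pos_iff, sub_ne_zero]; exact (Ne.symm hax)
    positivity

set_option maxHeartbeats 1000000 in
private lemma gammaPair_le_iff (f : H → ℝ) (Df : H → H) (x y : H) (hxy : x ≠ y)
    (κ : ℝ) (hκ : 0 < κ) :
    gammaPair f Df x y ≤ κ ↔
      ∀ a : H, 2 * |fieldEval f Df x a - fieldEval f Df y a| ≤
        κ * (‖x - a‖ ^ 2 + ‖y - a‖ ^ 2) := by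
  unfold gammaPair
  have hd : 0 < ‖x - y‖ := by rw [norm_pos_iff, sub_ne_zero]; exact hxy
  set K : ℝ := |f x - f y| with hK
  set L : ℝ := ‖Df x‖ + ‖Df y‖ with hL
  set M : ℝ := (4 * K + 2 * L) / ‖x - y‖ ^ 2 + L with hM
  have hbd : ∀ a : H, 2 * |fieldEval f Df x a - fieldEval f Df y a| ≤
      M * (‖x - a‖ ^ 2 + ‖y - a‖ ^ 2) := by
    intro a
    have h1 := abs_real_inner_le_norm (Df x) (a - x)
    have h2 := abs_real_inner_le_norm (Df y) (a - y)
    have e1 := abs_le.mp h1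
    have e2 := abs_le.mp h2
    have eK := abs_le.mp (le_refl K)
    rw [hK] at eK
    have hE : |fieldEval f Df x a - fieldEval f Df y a| ≤
        K + ‖Df x‖ * ‖a - x‖ + ‖Df y‖ * ‖a - y‖ := by
      rw [abs_le]; constructor <;>
        simp only [fieldEval] <;> linarith [eK.1, eK.2, e1.1, e1.2, e2.1, e2.2]
    have hrx : ‖a - x‖ = ‖x - a‖ := norm_sub_rev _ _
    have hry : ‖a - y‖ = ‖y - a‖ := norm_sub_rev _ _
    rw [hrx, hry] at hE
    have f1 : ‖Df x‖ * ‖x - a‖ ≤ ‖Df x‖ * (1 + ‖x - a‖ ^ 2) / 2 := by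
      nlinarith [mul_nonneg (norm_nonneg (Df x)) (sq_nonneg (1 - ‖x - a‖))]
    have f2 : ‖Df y‖ * ‖y - a‖ ≤ ‖Df y‖ * (1 + ‖y - a‖ ^ 2) / 2 := by
      nlinarith [mul_nonneg (norm_nonneg (Df y)) (sq_nonneg (1 - ‖y - a‖))]
    have f4 : ‖x - y‖ ^ 2 ≤ 2 * (‖x - a‖ ^ 2 + ‖y - a‖ ^ 2) := by
      have ht : ‖x - y‖ ≤ ‖x - a‖ + ‖y - a‖ := by
        have := norm_sub_le (x - a) (y - a)
        simpa [sub_sub_sub_cancel_right] using this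
      nlinarith [sq_nonneg (‖x - a‖ - ‖y - a‖), norm_nonneg (x - a), norm_nonneg (y - a)]
    have f6 : 0 ≤ (4 * K + 2 * L) / ‖x - y‖ ^ 2 := by
      apply div_nonneg _ (sq_nonneg _)
      have : 0 ≤ K := abs_nonneg _
      have : 0 ≤ L := by positivity
      linarith
    have f5 : (4 * K + 2 * L) / ‖x - y‖ ^ 2 * ‖x - y‖ ^ 2 = 4 * K + 2 * L :=
      div_mul_cancel₀ _ (by positivity)
    have f7 := mul_le_mul_of_nonneg_left f4 f6
    rw [f5] at f7
    have g1 : 0 ≤ ‖Df x‖ * ‖y - a‖ ^ 2 := mul_nonneg (norm_nonneg _) (sq_nonneg _)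
    have g2 : 0 ≤ ‖Df y‖ * ‖x - a‖ ^ 2 := mul_nonneg (norm_nonneg _) (sq_nonneg _)
    rw [hM]
    have hLn : 0 ≤ L := by rw [hL]; positivity
    nlinarith [hE, f1, f2, f7, g1, g2]
  have hQ : ∀ a : H, 0 < ‖x - a‖ ^ 2 + ‖y - a‖ ^ 2 := fun a => Q_pos x y a hxy
  have hbdd : BddAbove (Set.range fun a : H =>
      2 * |fieldEval f Df x a - fieldEval f Df y a| / (‖x - a‖ ^ 2 + ‖y - a‖ ^ 2)) := by
    refine ⟨M, ?_⟩
    rintro t ⟨a, rfl⟩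
    exact (div_le_iff₀ (hQ a)).mpr (hbd a)
  constructor
  · intro h a
    have := (le_ciSup hbdd a).trans h
    exact (div_le_iff₀ (hQ a)).mp this
  · intro h
    exact ciSup_le fun a => (div_le_iff₀ (hQ a)).mpr (h a)

end MyAux

/-- Let `Ω ⊆ ℝⁿ` be nonempty, `F = (f, Df)` a 1-field on `Ω` and `κ > 0`.
Then `Γ¹(F;Ω) ≤ κ` (i.e. `Γ¹(F;x,y) ≤ κ` for all `x ≠ y` in `Ω`) iff for all `x, y ∈ Ω`,
`f_y ≤ f_x + ½⟨D_xf + D_yf, y - x⟩ + (κ/4)‖y-x‖² − (1/(4κ))‖D_xf − D_yf‖²`. -/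
theorem stmt_15 {n : ℕ} (hn : 1 ≤ n) (Ω : Set (EuclideanSpace ℝ (Fin n)))
    (hΩne : Ω.Nonempty)
    (f : EuclideanSpace ℝ (Fin n) → ℝ)
    (Df : EuclideanSpace ℝ (Fin n) → EuclideanSpace ℝ (Fin n))
    (κ : ℝ) (hκpos : 0 < κ) :
    (∀ x ∈ Ω, ∀ y ∈ Ω, x ≠ y → gammaPair f Df x y ≤ κ) ↔
      ∀ x ∈ Ω, ∀ y ∈ Ω,
        f y ≤ f x + 1 / 2 * ⟪Df x + Df y, y - x⟫ + κ / 4 * ‖y - x‖ ^ 2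
          - 1 / (4 * κ) * ‖Df x - Df y‖ ^ 2 := by
  constructor
  · intro h x hx y hy
    rcases eq_or_ne x y with rfl | hxy
    · simp
    · have habs := (gammaPair_le_iff f Df x y hxy κ hκpos).mp (h x hx y hy hxy)
      apply (signed_iff κ hκpos (f x) (f y) x y (Df x) (Df y)).mp
      intro a
      have h1 := habs a
      have h2 := abs_le.mp (le_refl |fieldEval f Df x a - fieldEval f Df y a|)
      simp only [fieldEval] at h1 h2
      linarith [h2.1]
  · intro h x hx y hy hxy
    rw [gammaPair_le_iff f Df x y hxy κ hκpos]
    intro a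
    have t1 := (signed_iff κ hκpos (f x) (f y) x y (Df x) (Df y)).mpr (h x hx y hy) a
    have t2 := (signed_iff κ hκpos (f y) (f x) y x (Df y) (Df x)).mpr (h y hy x hx) a
    have habs : |fieldEval f Df x a - fieldEval f Df y a| ≤
        κ * (‖x - a‖ ^ 2 + ‖y - a‖ ^ 2) / 2 := by
      rw [abs_le]; constructor <;> simp only [fieldEval] <;> linarith
    linarith
end
end
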